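/- For every countable ordinal α, the immediate consequence operator T_P is α-monotonic: if I ⊑_α J then T_P(I) ⊑_α T_P(J). -/

import Mathlib

open Ordinal Set

noncomputable section
attribute [local instance] Classical.propDecidable

namespace IVS

/-- Countable ordinals: ordinals below `ω₁`. -/
abbrev Ord1 := {o : Ordinal.{0} // o < ω₁}

theorem zero_lt_omega1 : (0 : Ordinal) < ω₁ := omega_pos 1

theorem succ_lt_omega1 {o : Ordinal} (h : o < ω₁) : o + 1 < ω₁ := by
  rw [← Order.succ_eq_add_one]
  exact (Cardinal.isSuccLimit_omega 1).succ_lt h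

/-- zero as a countable ordinal -/
def O0 : Ord1 := ⟨0, zero_lt_omega1⟩

/-- successor on countable ordinals -/
def Ord1.succ (a : Ord1) : Ord1 := ⟨a.1 + 1, succ_lt_omega1 a.2⟩

/-- The truth domain `V`: `F_α < ⋯ < 0 < ⋯ < T_α` realized as a lexicographic sum. -/
abbrev TV := Ord1 ⊕ₗ (Unit ⊕ₗ Ord1ᵒᵈ)

/-- the false value `F_α` -/
def TV.F (a : Ord1) : TV := toLex (Sum.inl a)
/-- the middle value `0` -/
def TV.Z : TV := toLex (Sum.inr (toLex (Sum.inl ())))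
/-- the true value `T_α` -/
def TV.T (a : Ord1) : TV := toLex (Sum.inr (toLex (Sum.inr (OrderDual.toDual a))))

/-- the order of a truth value (`⊤` codes `+∞`, the order of `0`) -/
def ordOf (v : TV) : WithTop Ordinal :=
  match ofLex v with
  | .inl a => (a.1 : Ordinal)
  | .inr b =>
    match ofLex b with
    | .inl _ => ⊤
    | .inr a => ((OrderDual.ofDual a).1 : Ordinal)

/-- negation-as-failure: `¬F_α = T_{α+1}`, `¬T_α = F_{α+1}`, `¬0 = 0`. -/
def negv (v : TV) : TV :=
  match ofLex v with
  | .inl a => TV.T a.succ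
  | .inr b =>
    match ofLex b with
    | .inl _ => TV.Z
    | .inr a => TV.F (OrderDual.ofDual a).succ

/-- Literals of a propositional normal program (atoms are natural numbers). -/
inductive Lit where
  | pos (n : ℕ)
  | neg (n : ℕ)
  | tt
  | ff

/-- A normal program clause: a head atom and a body which is a conjunction of literals. -/
structure Clause where
  head : ℕ
  body : List Lit

/-- A (possibly infinite) propositional normal logic program. -/
abbrev Program := Set Clause

/-- Infinite-valued interpretations. -/
abbrev Interp := ℕ → TV

/-- the interpretation assigning `F₀` to every atom (denoted `∅` in the paper) -/
def botI : Interp := fun _ => TV.F O0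

def evalLit (I : Interp) : Lit → TV
  | .pos n => I n
  | .neg n => negv (I n)
  | .tt => TV.T O0
  | .ff => TV.F O0

/-- value of a body (conjunction evaluated by `min`; empty conjunction is `T₀`) -/
def evalBody (I : Interp) (b : List Lit) : TV :=
  (b.map (evalLit I)).foldr min (TV.T O0)

/-- least upper bound in `V` (well-defined by the lub-existence theorem) -/
def lub (S : Set TV) : TV := if h : ∃ v, IsLUB S v then h.choose else TV.Z

/-- the immediate consequence operator -/
def TP (P : Program) (I : Interp) : Interp :=
  fun p => lub {v | ∃ c ∈ P, c.head = p ∧ evalBody I c.body = v}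

/-- `I` is an (infinite-valued) model of `P` -/
def isModel (P : Program) (I : Interp) : Prop :=
  ∀ c ∈ P, evalBody I c.body ≤ I c.head

/-- the level set `I ∥ v` -/
def level (I : Interp) (v : TV) : Set ℕ := {p | I p = v}

/-- `I =_α J` -/
def eqA (α : Ord1) (I J : Interp) : Prop :=
  ∀ β ≤ α, level I (TV.T β) = level J (TV.T β) ∧ level I (TV.F β) = level J (TV.F β)

/-- `I ⊏_α J` -/
def sqltA (α : Ord1) (I J : Interp) : Prop :=
  (∀ β < α, eqA β I J) ∧
    ((level I (TV.T α) ⊂ level J (TV.T α) ∧ level J (TV.F α) ⊆ level I (TV.F α)) ∨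
     (level I (TV.T α) ⊆ level J (TV.T α) ∧ level J (TV.F α) ⊂ level I (TV.F α)))

/-- `I ⊑_α J` -/
def sqleA (α : Ord1) (I J : Interp) : Prop := eqA α I J ∨ sqltA α I J

/-- `I ⊏_∞ J` -/
def sqltInf (I J : Interp) : Prop := ∃ α : Ord1, sqltA α I J

/-- `I ⊑_∞ J` -/
def sqleInf (I J : Interp) : Prop := I = J ∨ sqltInf I J

/-- the sequence `T_P^n(I)` is an `α`-chain -/
def isChainA (P : Program) (α : Ord1) (I : Interp) : Prop :=
  ∀ n : ℕ, sqleA α ((TP P)^[n] I) ((TP P)^[n + 1] I)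

/-- the interpretation `T_{P,α}^ω(I)` -/
def TPomega (P : Program) (α : Ord1) (I : Interp) : Interp := fun p =>
  if ordOf (I p) < (α.1 : WithTop Ordinal) then I p
  else if ∃ n : ℕ, (TP P)^[n] I p = TV.T α then TV.T α
  else if ∀ n : ℕ, (TP P)^[n] I p = TV.F α then TV.F α
  else TV.F α.succ

/-- `⊔_{β<α} M_β` for a family defined below `α` -/
def sqcupI (α : Ord1) (f : ∀ β : Ordinal, β < α.1 → Interp) : Interp := fun p =>
  if h : ∃ β : Ordinal, ∃ hb : β < α.1, ordOf (f β hb p) = (β : WithTop Ordinal)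
  then f h.choose h.choose_spec.choose p
  else TV.F α

/-- the approximations `M_α` to the minimum model (junk values for `α ≥ ω₁`) -/
def MA (P : Program) (o : Ordinal) : Interp :=
  Ordinal.limitRecOn o
    (TPomega P O0 botI)
    (fun o' ih => if h : o' + 1 < ω₁ then TPomega P ⟨o' + 1, h⟩ ih else ih)
    (fun o' _ ih =>
      if h : o' < ω₁ then TPomega P ⟨o', h⟩ (sqcupI ⟨o', h⟩ ih) else botI)

/-- `M_α` for a countable ordinal `α` -/
def Mα (P : Program) (α : Ord1) : Interp := MA P α.1

/-- the defining property of the depth `δ` of a program -/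
def isDepth (P : Program) (δ : Ord1) : Prop :=
  (level (Mα P δ) (TV.T δ) = ∅ ∧ level (Mα P δ) (TV.F δ) = ∅) ∧
    ∀ β : Ord1, β < δ →
      (level (Mα P β) (TV.T β) ≠ ∅ ∨ level (Mα P β) (TV.F β) ≠ ∅)

/-- the depth of a program -/
def depth (P : Program) : Ord1 :=
  if h : ∃ δ : Ord1, isDepth P δ then h.choose else O0

/-- the minimum model `M_P` -/
def MP (P : Program) : Interp := fun p =>
  if ordOf (Mα P (depth P) p) < ((depth P).1 : WithTop Ordinal)
  then Mα P (depth P) p else TV.Z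

/-- the set of all infinite-valued models of `P` -/
def models (P : Program) : Set Interp := {I | isModel P I}

/-- `M ♯ α`: the part of `M` consisting of values of order `α` -/
def sharp (I : Interp) (α : Ord1) : Set (ℕ × TV) :=
  {pv | I pv.1 = pv.2 ∧ ordOf pv.2 = (α.1 : WithTop Ordinal)}

/-- `⨀^α S = ⋀^α S ∪ ⋁^α S` -/
def odot (α : Ord1) (S : Set Interp) : Set (ℕ × TV) :=
  {pv | (∃ p : ℕ, pv = (p, TV.T α) ∧ ∀ M ∈ S, M p = TV.T α) ∨
        (∃ p : ℕ, pv = (p, TV.F α) ∧ ∃ M ∈ S, M p = TV.F α)}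

/-- the sets `S_α` of the model intersection construction (junk for `α ≥ ω₁`) -/
def SA (P : Program) (o : Ordinal) : Set Interp :=
  Ordinal.limitRecOn o
    {M ∈ models P | sharp M O0 = odot O0 (models P)}
    (fun o' ih =>
      if h : o' + 1 < ω₁ then {M ∈ ih | sharp M ⟨o' + 1, h⟩ = odot ⟨o' + 1, h⟩ ih} else ih)
    (fun o' _ ih =>
      if h : o' < ω₁ then
        {M : Interp | M ∈ (⋂ (b : Ordinal) (hb : b < o'), ih b hb) ∧
          sharp M ⟨o', h⟩ = odot ⟨o', h⟩ (⋂ (b : Ordinal) (hb : b < o'), ih b hb)}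
      else ∅)

/-!
Pointwise, `I ⊑_α J` says that each `I p` equals `J p`, or else `I p ∈ [F_α, T_α)` and
`J p ∈ (F_α, T_α]`. In any linear order this relation, with `F_α < T_α` replaced by any `a < t`,
is preserved by `min`, and by suprema as soon as `t` has an immediate predecessor (here `T_{α+1}`),
since a supremum equal to `t` is then attained. Negation maps `[F_α, T_α]` into `(F_α, T_α)`.
So the relation passes through literals, clause bodies and the lub defining `T_P`.
-/

section IcoIocRel

variable {L : Type*} [LinearOrder L] {a t v w x x' y y' : L}

def IcoIocRel (a t v w : L) : Prop := v = w ∨ (v ∈ Ico a t ∧ w ∈ Ioc a t)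

theorem IcoIocRel.refl (a t v : L) : IcoIocRel a t v v := Or.inl rfl

theorem icoIocRel_iff :
    IcoIocRel a t v w ↔
      (v ∉ Icc a t ∨ w ∉ Icc a t → v = w) ∧ (v = t → w = t) ∧ (w = a → v = a) := by
  constructor
  · rintro (rfl | ⟨hv, hw⟩)
    · simp
    · exact ⟨fun h => (h.elim (· (Ico_subset_Icc_self hv)) (· (Ioc_subset_Icc_self hw))).elim,
        fun h => (hv.2.ne h).elim, fun h => (hw.1.ne' h).elim⟩
  · rintro ⟨hout, htop, hbot⟩
    by_cases hvw : v = w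
    · exact Or.inl hvw
    obtain ⟨hv, hw⟩ : v ∈ Icc a t ∧ w ∈ Icc a t := by tauto
    exact Or.inr ⟨⟨hv.1, hv.2.lt_of_ne fun h => hvw (h.trans (htop h).symm)⟩,
      hw.1.lt_of_ne fun h => hvw ((hbot h.symm).trans h), hw.2⟩

theorem IcoIocRel.eq_of_notMem_Ico (h : IcoIocRel a t v w) (hv : v ∉ Ico a t) : v = w :=
  h.resolve_right fun h' => hv h'.1

theorem IcoIocRel.le_iff_le {u : L} (h : IcoIocRel a t v w) (hu : t ≤ u) : v ≤ u ↔ w ≤ u := by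
  rcases h with rfl | ⟨hv, hw⟩
  · rfl
  · exact iff_of_true (hv.2.le.trans hu) (hw.2.trans hu)

theorem IcoIocRel.map {φ : L → L} (hφ : MapsTo φ (Icc a t) (Ioo a t)) (h : IcoIocRel a t v w) :
    IcoIocRel a t (φ v) (φ w) := by
  rcases h with rfl | ⟨hv, hw⟩
  · exact refl a t _
  · exact Or.inr ⟨Ioo_subset_Ico_self (hφ (Ico_subset_Icc_self hv)),
      Ioo_subset_Ioc_self (hφ (Ioc_subset_Icc_self hw))⟩

theorem IcoIocRel.min_left (x : L) (h : IcoIocRel a t y y') :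
    IcoIocRel a t (min x y) (min x y') := by
  rcases h with rfl | ⟨⟨hay, hyt⟩, hay', hyt'⟩
  · exact refl a t _
  rcases le_or_gt x a with hxa | hax
  · left
    rw [min_eq_left (hxa.trans hay), min_eq_left (hxa.trans hay'.le)]
  · exact Or.inr ⟨⟨le_min hax.le hay, min_lt_of_right_lt hyt⟩,
      lt_min hax hay', min_le_of_right_le hyt'⟩

theorem IcoIocRel.min (hx : IcoIocRel a t x x') (hy : IcoIocRel a t y y') :
    IcoIocRel a t (min x y) (min x' y') := by
  rcases hx with rfl | hx
  · exact hy.min_left x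
  rcases hy with rfl | hy
  · rw [min_comm x, min_comm x']
    exact IcoIocRel.min_left y (Or.inr hx)
  · exact Or.inr ⟨min_rec' _ hx.1 hy.1, min_rec' _ hx.2 hy.2⟩

theorem IcoIocRel.isLUB {ι : Type*} {C : Set ι} {f g : ι → L} {t' s s' : L} (ht : t' ⋖ t)
    (hfg : ∀ i ∈ C, IcoIocRel a t (f i) (g i))
    (hs : IsLUB (f '' C) s) (hs' : IsLUB (g '' C) s') : IcoIocRel a t s s' := by
  have key : ∀ u, t ≤ u → (s ≤ u ↔ s' ≤ u) := fun u hu => by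
    simp only [isLUB_le_iff hs, isLUB_le_iff hs', mem_upperBounds, forall_mem_image]
    exact forall₂_congr fun i hi => (hfg i hi).le_iff_le hu
  by_cases heq : ∀ i ∈ C, f i = g i
  · exact Or.inl (hs.unique (image_congr heq ▸ hs'))
  push Not at heq
  obtain ⟨i, hi, hne⟩ := heq
  obtain ⟨hfi, hgi⟩ := (hfg i hi).resolve_left hne
  rcases lt_or_ge s t with hst | hts
  · exact Or.inr ⟨⟨hfi.1.trans (hs.1 (mem_image_of_mem f hi)), hst⟩,
      hgi.1.trans_le (hs'.1 (mem_image_of_mem g hi)), (key t le_rfl).1 hst.le⟩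
  · obtain ⟨_, ⟨j, hj, rfl⟩, hfj⟩ := (lt_isLUB_iff hs).1 (ht.lt.trans_le hts)
    have hgj : f j = g j := (hfg j hj).eq_of_notMem_Ico fun h => (ht.ge_of_gt hfj).not_gt h.2
    have hts' : t ≤ s' := calc
      t ≤ f j := ht.ge_of_gt hfj
      _ = g j := hgj
      _ ≤ s' := hs'.1 (mem_image_of_mem g hj)
    exact Or.inl (le_antisymm ((key s' hts').2 le_rfl) ((key s hts).1 le_rfl))

end IcoIocRel

theorem exists_isLUB_of_bddAbove {L : Type*} [LinearOrder L] [WellFoundedLT L] {B : Set L}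
    (hB : BddAbove B) : ∃ m, IsLUB B m := by
  obtain ⟨m, hm, hmin⟩ := wellFounded_lt.has_min _ hB
  exact ⟨m, hm, fun u hu => not_lt.1 (hmin u hu)⟩

theorem Ord1.lt_succ_iff {a b : Ord1} : b < a.succ ↔ b ≤ a :=
  Order.lt_add_one_iff (x := b.1) (y := a.1)

namespace TV

theorem cases_F_Z_T (v : TV) : (∃ a, v = F a) ∨ v = Z ∨ ∃ a, v = T a := by
  rcases h : ofLex v with a | b
  · exact Or.inl ⟨a, by rw [← toLex_ofLex v, h]; rfl⟩
  · rcases h2 : ofLex b with u | a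
    · exact Or.inr (Or.inl (by rw [← toLex_ofLex v, h, ← toLex_ofLex b, h2]; rfl))
    · exact Or.inr (Or.inr ⟨OrderDual.ofDual a, by
        rw [← toLex_ofLex v, h, ← toLex_ofLex b, h2]; rfl⟩)

variable {a b : Ord1}

@[simp] theorem F_le_F_iff : F a ≤ F b ↔ a ≤ b := Sum.Lex.inl_le_inl_iff
@[simp] theorem F_lt_F_iff : F a < F b ↔ a < b := Sum.Lex.inl_lt_inl_iff
@[simp] theorem T_le_T_iff : T a ≤ T b ↔ b ≤ a :=
  Sum.Lex.inr_le_inr_iff.trans (Sum.Lex.inr_le_inr_iff.trans OrderDual.toDual_le_toDual)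
@[simp] theorem T_lt_T_iff : T a < T b ↔ b < a :=
  Sum.Lex.inr_lt_inr_iff.trans (Sum.Lex.inr_lt_inr_iff.trans OrderDual.toDual_lt_toDual)
@[simp] theorem F_lt_Z : F a < Z := Sum.Lex.inl_lt_inr _ _
@[simp] theorem F_lt_T : F a < T b := Sum.Lex.inl_lt_inr _ _
@[simp] theorem Z_lt_T : Z < T b := Sum.Lex.inr_lt_inr_iff.2 (Sum.Lex.inl_lt_inr _ _)

@[simp] theorem F_inj : F a = F b ↔ a = b := by simp [le_antisymm_iff]
@[simp] theorem T_inj : T a = T b ↔ a = b := by simp [le_antisymm_iff, and_comm]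

@[simp] theorem F_le_Z : F a ≤ Z := F_lt_Z.le
@[simp] theorem F_le_T : F a ≤ T b := F_lt_T.le
@[simp] theorem Z_le_T : Z ≤ T b := Z_lt_T.le
@[simp] theorem not_T_lt_F : ¬ T b < F a := F_lt_T.not_gt
@[simp] theorem not_T_lt_Z : ¬ T b < Z := Z_lt_T.not_gt
@[simp] theorem F_ne_T : F a ≠ T b := F_lt_T.ne
@[simp] theorem Z_ne_T : Z ≠ T b := Z_lt_T.ne
@[simp] theorem Z_ne_F : Z ≠ F a := F_lt_Z.ne'
@[simp] theorem T_ne_F : T b ≠ F a := F_lt_T.ne'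

theorem negv_F : negv (F a) = T a.succ := rfl
theorem negv_Z : negv Z = Z := rfl
theorem negv_T : negv (T a) = F a.succ := rfl

theorem negv_mapsTo (α : Ord1) : MapsTo negv (Icc (F α) (T α)) (Ioo (F α) (T α)) := by
  intro v hv
  rcases cases_F_Z_T v with ⟨b, rfl⟩ | rfl | ⟨b, rfl⟩ <;>
    simp only [mem_Icc, mem_Ioo, negv_F, negv_Z, negv_T, F_le_F_iff, T_le_T_iff, F_lt_F_iff,
      T_lt_T_iff, Ord1.lt_succ_iff] at hv ⊢
  · exact ⟨F_lt_T, hv.1⟩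
  · exact ⟨F_lt_Z, Z_lt_T⟩
  · exact ⟨hv.2, F_lt_T⟩

theorem T_succ_covBy_T (α : Ord1) : T α.succ ⋖ T α := by
  refine ⟨T_lt_T_iff.2 (Ord1.lt_succ_iff.2 le_rfl), fun c h₁ h₂ => ?_⟩
  rcases cases_F_Z_T c with ⟨b, rfl⟩ | rfl | ⟨b, rfl⟩
  · exact not_T_lt_F h₁
  · exact not_T_lt_Z h₁
  · rw [T_lt_T_iff, Ord1.lt_succ_iff] at h₁
    exact (T_lt_T_iff.1 h₂).not_ge h₁

theorem exists_isLUB_of_forall_eq_F {S : Set TV} (hS : ∀ v ∈ S, ∃ b, v = F b) :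
    ∃ v, IsLUB S v := by
  by_cases hB : BddAbove {b | F b ∈ S}
  · obtain ⟨m, hm⟩ := exists_isLUB_of_bddAbove hB
    refine ⟨F m, fun v hv => ?_, fun u hu => ?_⟩
    · obtain ⟨b, rfl⟩ := hS v hv
      exact F_le_F_iff.2 (hm.1 hv)
    · rcases cases_F_Z_T u with ⟨c, rfl⟩ | rfl | ⟨c, rfl⟩
      · exact F_le_F_iff.2 (hm.2 fun b hb => F_le_F_iff.1 (hu hb))
      · exact F_le_Z
      · exact F_le_T
  · refine ⟨Z, fun v hv => ?_, fun u hu => ?_⟩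
    · obtain ⟨b, rfl⟩ := hS v hv
      exact F_le_Z
    · rcases cases_F_Z_T u with ⟨c, rfl⟩ | rfl | ⟨c, rfl⟩
      · exact (hB ⟨c, fun b hb => F_le_F_iff.1 (hu hb)⟩).elim
      · exact le_rfl
      · exact Z_le_T

theorem exists_isLUB (S : Set TV) : ∃ v, IsLUB S v := by
  by_cases hT : ∃ b, T b ∈ S
  · obtain ⟨b, hb, hmin⟩ := wellFounded_lt.has_min {b | T b ∈ S} hT
    refine ⟨T b, IsGreatest.isLUB ⟨hb, fun v hv => ?_⟩⟩
    rcases cases_F_Z_T v with ⟨c, rfl⟩ | rfl | ⟨c, rfl⟩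
    exacts [F_le_T, Z_le_T, T_le_T_iff.2 (not_lt.1 (hmin c hv))]
  push Not at hT
  by_cases hZ : Z ∈ S
  · refine ⟨Z, IsGreatest.isLUB ⟨hZ, fun v hv => ?_⟩⟩
    rcases cases_F_Z_T v with ⟨c, rfl⟩ | rfl | ⟨c, rfl⟩
    exacts [F_le_Z, le_rfl, (hT c hv).elim]
  · refine exists_isLUB_of_forall_eq_F fun v hv => ?_
    rcases cases_F_Z_T v with ⟨c, rfl⟩ | rfl | ⟨c, rfl⟩
    exacts [⟨c, rfl⟩, (hZ hv).elim, (hT c hv).elim]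

theorem isLUB_lub (S : Set TV) : IsLUB S (lub S) := by
  rw [lub, dif_pos (exists_isLUB S)]
  exact (exists_isLUB S).choose_spec

theorem notMem_Icc_F_T_iff {v : TV} {α : Ord1} :
    v ∉ Icc (F α) (T α) ↔ ∃ β < α, v = F β ∨ v = T β := by
  rcases cases_F_Z_T v with ⟨b, rfl⟩ | rfl | ⟨b, rfl⟩ <;> simp [-Subtype.exists]

end TV

theorem sqleA_iff_levels {α : Ord1} {I J : Interp} : sqleA α I J ↔
    (∀ β < α, level I (TV.T β) = level J (TV.T β) ∧ level I (TV.F β) = level J (TV.F β)) ∧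
      level I (TV.T α) ⊆ level J (TV.T α) ∧ level J (TV.F α) ⊆ level I (TV.F α) := by
  constructor
  · rintro (h | ⟨hbelow, h⟩)
    · exact ⟨fun β hβ => h β hβ.le, (h α le_rfl).1.subset, (h α le_rfl).2.superset⟩
    · refine ⟨fun β hβ => hbelow β hβ β le_rfl, ?_⟩
      rcases h with ⟨hT, hF⟩ | ⟨hT, hF⟩
      exacts [⟨hT.subset, hF⟩, ⟨hT, hF.subset⟩]
  · rintro ⟨hbelow, hT, hF⟩
    have hbelow' : ∀ β < α, eqA β I J := fun β hβ γ hγ => hbelow γ (hγ.trans_lt hβ)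
    by_cases hTeq : level I (TV.T α) = level J (TV.T α)
    · by_cases hFeq : level J (TV.F α) = level I (TV.F α)
      · exact Or.inl fun β hβ => hβ.lt_or_eq.elim (hbelow β) fun h => h ▸ ⟨hTeq, hFeq.symm⟩
      · exact Or.inr ⟨hbelow', Or.inr ⟨hT, hF.ssubset_of_ne hFeq⟩⟩
    · exact Or.inr ⟨hbelow', Or.inl ⟨hT.ssubset_of_ne hTeq, hF⟩⟩

theorem sqleA_iff_forall_icoIocRel {α : Ord1} {I J : Interp} :
    sqleA α I J ↔ ∀ p, IcoIocRel (TV.F α) (TV.T α) (I p) (J p) := by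
  simp only [sqleA_iff_levels, icoIocRel_iff, TV.notMem_Icc_F_T_iff, level, Set.ext_iff,
    Set.subset_def, mem_ofPred_eq]
  constructor
  · rintro ⟨hbelow, hT, hF⟩ p
    refine ⟨?_, hT p, hF p⟩
    rintro (⟨β, hβ, h | h⟩ | ⟨β, hβ, h | h⟩)
    · exact h.trans (((hbelow β hβ).2 p).1 h).symm
    · exact h.trans (((hbelow β hβ).1 p).1 h).symm
    · exact (((hbelow β hβ).2 p).2 h).trans h.symm
    · exact (((hbelow β hβ).1 p).2 h).trans h.symm
  · intro h
    refine ⟨fun β hβ => ⟨fun p => ?_, fun p => ?_⟩, fun p => (h p).2.1, fun p => (h p).2.2⟩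
    · exact ⟨fun e => ((h p).1 (.inl ⟨β, hβ, .inr e⟩)).symm.trans e,
        fun e => ((h p).1 (.inr ⟨β, hβ, .inr e⟩)).trans e⟩
    · exact ⟨fun e => ((h p).1 (.inl ⟨β, hβ, .inl e⟩)).symm.trans e,
        fun e => ((h p).1 (.inr ⟨β, hβ, .inl e⟩)).trans e⟩

/-- `evalBody` folds with the lattice `min` of `Sum.Lex`, which agrees with the linear-order `min`
only propositionally. -/
theorem evalBody_cons (I : Interp) (l : Lit) (b : List Lit) :
    evalBody I (l :: b) = @min TV LinearOrder.toMin (evalLit I l) (evalBody I b) :=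
  le_antisymm (le_min inf_le_left inf_le_right) (le_inf (min_le_left _ _) (min_le_right _ _))

section Monotonicity

variable {α : Ord1} {I J : Interp}

theorem evalLit_icoIocRel (h : ∀ p, IcoIocRel (TV.F α) (TV.T α) (I p) (J p)) (l : Lit) :
    IcoIocRel (TV.F α) (TV.T α) (evalLit I l) (evalLit J l) := by
  cases l with
  | pos n => exact h n
  | neg n => exact (h n).map (TV.negv_mapsTo α)
  | tt | ff => exact .refl _ _ _

theorem evalBody_icoIocRel (h : ∀ p, IcoIocRel (TV.F α) (TV.T α) (I p) (J p)) (b : List Lit) :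
    IcoIocRel (TV.F α) (TV.T α) (evalBody I b) (evalBody J b) := by
  induction b with
  | nil => exact .refl _ _ _
  | cons l b ih =>
    rw [evalBody_cons, evalBody_cons]
    exact (evalLit_icoIocRel h l).min ih

theorem TP_icoIocRel (P : Program) (h : ∀ p, IcoIocRel (TV.F α) (TV.T α) (I p) (J p)) (p : ℕ) :
    IcoIocRel (TV.F α) (TV.T α) (TP P I p) (TP P J p) := by
  have bodies (K : Interp) :
      TP P K p = lub ((fun c : Clause => evalBody K c.body) '' {c | c ∈ P ∧ c.head = p}) := by
    unfold TP
    congr 1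
    ext
    simp [and_assoc]
  rw [bodies I, bodies J]
  exact IcoIocRel.isLUB (TV.T_succ_covBy_T α) (fun c _ => evalBody_icoIocRel h c.body)
    (TV.isLUB_lub _) (TV.isLUB_lub _)

end Monotonicity

/-- `T_P` is `α`-monotonic for every countable ordinal `α`. -/
theorem TP_alpha_monotonic (P : Program) (α : Ord1) (I J : Interp)
    (h : sqleA α I J) : sqleA α (TP P I) (TP P J) := by
  rw [sqleA_iff_forall_icoIocRel] at h ⊢
  exact TP_icoIocRel P h

end IVS
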